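/- Let p be a real-valued valuated matroid of rank d on {1,…,n}. Define y ∈ ℝⁿ by y_i = min over all (d−1)-subsets σ ⊆ {1,…,n} with i ∉ σ of (p(σ∪{i}) − min_{j ∉ σ} p(σ∪{j})). Then y is the least element of {w ∈ L_p : w ≥ 0 coordinatewise}; that is, the projection of the origin onto L_p is the coordinatewise minimum (tropical sum) of all cocircuits of p, each normalized to have nonnegative entries with at least one entry zero. -/

import Mathlib

/-!
Write `y` for the tropical sum of the normalized cocircuits. To see `y ∈ L_p`, fix a
`(d+1)`-set `τ` and a minimizer `i₀` of `p(τ ∖ i) + y_i`; if `σ₀` is the cocircuit realising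
`y_{i₀}`, then on `τ ∖ σ₀` the terms `p(τ ∖ x) + y_x` are bounded above by the exchange terms
`p(σ₀ ∪ x) + p(τ ∖ x)` (shifted by a constant), with equality at `i₀`, so the two minimizers of
the exchange axiom are also minimizers for `τ`. Conversely, for `w ∈ L_p` with `w ≥ 0`, the
twisted Plücker vector `B ↦ p(B) − ∑_{k∈B} w_k` has, for every `i`, a minimizing basis `B ∋ i`
(the tropical condition at `B₀ ∪ i` moves a global minimizer `B₀` onto `i`); the cocircuit at
`σ = B ∖ i` then shows `y_i ≤ w_i`.
-/

noncomputable section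

/-- The minimum of `f` over the finite set `s` is attained at least twice. -/
def MinAttainedTwice {ι α : Type*} [LinearOrder α] (s : Finset ι) (f : ι → α) : Prop :=
  ∃ i ∈ s, ∃ j ∈ s, i ≠ j ∧ f i = f j ∧ ∀ k ∈ s, f i ≤ f k

/-- A real-valued valuated matroid of rank `d` on `{1,…,n}` (only the values on
`d`-element subsets matter): the exchange axiom with minimum over `i ∈ τ ∖ σ`. -/
def IsValuatedMatroidR (d n : ℕ) (p : Finset (Fin n) → ℝ) : Prop :=
  ∀ σ τ : Finset (Fin n), σ.card = d - 1 → τ.card = d + 1 →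
    MinAttainedTwice (τ \ σ) (fun i => p (insert i σ) + p (τ.erase i))

/-- Membership in the tropical linear space `L_p`. -/
def InTropLinSpace (d n : ℕ) (p : Finset (Fin n) → ℝ) (x : Fin n → ℝ) : Prop :=
  ∀ τ : Finset (Fin n), τ.card = d + 1 →
    MinAttainedTwice τ (fun i => p (τ.erase i) + x i)

/-- The tropical sum of the normalized cocircuits:
`y i = min_{σ : |σ| = d−1, i ∉ σ} (p(σ∪{i}) − min_{j ∉ σ} p(σ∪{j}))`.
(The inner minimum is taken over `insert i σᶜ`, which equals `σᶜ` for the relevant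
sets `σ` with `i ∉ σ`.) -/
def cocircuitTropSum {n : ℕ} (d : ℕ) (hd : 1 ≤ d) (hdn : d ≤ n)
    (p : Finset (Fin n) → ℝ) : Fin n → ℝ :=
  fun i =>
    (((Finset.univ : Finset (Fin n)).powersetCard (d - 1)).filter (fun σ => i ∉ σ)).inf'
      (by
        obtain ⟨t, hts, htc⟩ := Finset.exists_subset_card_eq (s := Finset.univ.erase i)
          (n := d - 1)
          (by
            have hc : (Finset.univ.erase i).card = n - 1 := by
              rw [Finset.card_erase_of_mem (Finset.mem_univ i)]
              simp
            omega)
        refine ⟨t, Finset.mem_filter.mpr ⟨Finset.mem_powersetCard.mpr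
          ⟨Finset.subset_univ t, htc⟩, fun hit => ?_⟩⟩
        exact (Finset.notMem_erase i Finset.univ) (hts hit))
      (fun σ => p (insert i σ) -
        (insert i σᶜ).inf' (Finset.insert_nonempty _ _) (fun j => p (insert j σ)))

open Finset

namespace MinAttainedTwice

variable {ι α β : Type*} [LinearOrder α] [LinearOrder β] {s t : Finset ι} {f g : ι → α}

theorem comp_monotone {φ : α → β} (hφ : Monotone φ) (h : MinAttainedTwice s f) :
    MinAttainedTwice s (φ ∘ f) := by
  obtain ⟨i, hi, j, hj, hij, hfij, hmin⟩ := h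
  exact ⟨i, hi, j, hj, hij, congrArg φ hfij, fun k hk => hφ (hmin k hk)⟩

theorem exists_ne_eq_of_isMin (h : MinAttainedTwice s f) {a : ι} (ha : a ∈ s)
    (hmin : ∀ x ∈ s, f a ≤ f x) : ∃ b ∈ s, b ≠ a ∧ f b = f a := by
  obtain ⟨i, hi, j, hj, hij, hfij, hfmin⟩ := h
  have hfi : f i = f a := le_antisymm (hfmin a ha) (hmin i hi)
  by_cases hia : i = a
  · exact ⟨j, hj, hia ▸ hij.symm, hfij ▸ hfi⟩
  · exact ⟨i, hi, hia, hfi⟩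

theorem of_le_of_eq_of_isMin (hst : s ⊆ t) (hg : MinAttainedTwice s g)
    (hfg : ∀ x ∈ s, f x ≤ g x) {a : ι} (ha : a ∈ s) (hmin : ∀ x ∈ t, f a ≤ f x)
    (heq : f a = g a) : MinAttainedTwice t f := by
  obtain ⟨i, hi, j, hj, hij, hgij, hgmin⟩ := hg
  have hfi : f i = f a := le_antisymm ((hfg i hi).trans (heq ▸ hgmin a ha)) (hmin i (hst hi))
  have hfj : f j = f a :=
    le_antisymm ((hfg j hj).trans (hgij ▸ heq ▸ hgmin a ha)) (hmin j (hst hj))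
  exact ⟨i, hst hi, j, hst hj, hij, hfi.trans hfj.symm, fun k hk => hfi ▸ hmin k hk⟩

end MinAttainedTwice

section Cocircuits

variable {d n : ℕ} {p : Finset (Fin n) → ℝ}

def normalizedCocircuit (p : Finset (Fin n) → ℝ) (σ : Finset (Fin n)) (i : Fin n) : ℝ :=
  p (insert i σ) - (insert i σᶜ).inf' (insert_nonempty _ _) fun j => p (insert j σ)

theorem normalizedCocircuit_nonneg (σ : Finset (Fin n)) (i : Fin n) :
    0 ≤ normalizedCocircuit p σ i :=
  sub_nonneg.mpr (inf'_le _ (mem_insert_self i _))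

theorem normalizedCocircuit_sub_normalizedCocircuit {σ : Finset (Fin n)} {i j : Fin n}
    (hi : i ∉ σ) (hj : j ∉ σ) :
    normalizedCocircuit p σ i - normalizedCocircuit p σ j = p (insert i σ) - p (insert j σ) := by
  simp only [normalizedCocircuit, insert_eq_of_mem (mem_compl.mpr hi),
    insert_eq_of_mem (mem_compl.mpr hj)]
  ring

theorem normalizedCocircuit_le {σ : Finset (Fin n)} {i : Fin n} (hi : i ∉ σ) {c : ℝ}
    (h : ∀ j ∉ σ, p (insert i σ) - c ≤ p (insert j σ)) : normalizedCocircuit p σ i ≤ c := by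
  have hle : p (insert i σ) - c ≤ (insert i σᶜ).inf' (insert_nonempty _ _)
      fun j => p (insert j σ) := by
    refine le_inf' _ _ fun j hj => h j (mem_compl.mp ?_)
    rwa [insert_eq_of_mem (mem_compl.mpr hi)] at hj
  unfold normalizedCocircuit
  linarith

variable (hd : 1 ≤ d) (hdn : d ≤ n)

theorem cocircuitTropSum_le_normalizedCocircuit {σ : Finset (Fin n)} (hσ : σ.card = d - 1)
    {i : Fin n} (hi : i ∉ σ) : cocircuitTropSum d hd hdn p i ≤ normalizedCocircuit p σ i :=
  inf'_le _ (mem_filter.mpr ⟨mem_powersetCard_univ.mpr hσ, hi⟩)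

theorem exists_normalizedCocircuit_eq_cocircuitTropSum (i : Fin n) :
    ∃ σ : Finset (Fin n), σ.card = d - 1 ∧ i ∉ σ ∧
      cocircuitTropSum d hd hdn p i = normalizedCocircuit p σ i := by
  obtain ⟨σ, hσ, heq⟩ : ∃ σ ∈ _, cocircuitTropSum d hd hdn p i = normalizedCocircuit p σ i :=
    exists_mem_eq_inf' _ _
  obtain ⟨hσcard, hi⟩ := mem_filter.mp hσ
  exact ⟨σ, mem_powersetCard_univ.mp hσcard, hi, heq⟩

theorem cocircuitTropSum_nonneg : 0 ≤ cocircuitTropSum d hd hdn p := fun i => by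
  obtain ⟨σ, -, -, heq⟩ := exists_normalizedCocircuit_eq_cocircuitTropSum hd hdn (p := p) i
  exact heq ▸ normalizedCocircuit_nonneg σ i

theorem inTropLinSpace_cocircuitTropSum (hp : IsValuatedMatroidR d n p) :
    InTropLinSpace d n p (cocircuitTropSum d hd hdn p) := by
  set y := cocircuitTropSum d hd hdn p
  intro τ hτ
  obtain ⟨i₀, hi₀, hmin⟩ :=
    exists_min_image τ (fun k => p (τ.erase k) + y k) (card_pos.mp (by omega))
  obtain ⟨σ₀, hσ₀, hi₀σ₀, hy₀⟩ := exists_normalizedCocircuit_eq_cocircuitTropSum hd hdn i₀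
  set c := y i₀ - p (insert i₀ σ₀)
  have hexchange := (hp σ₀ τ hσ₀ hτ).comp_monotone (monotone_id.add_const c)
  refine hexchange.of_le_of_eq_of_isMin sdiff_subset ?_ (mem_sdiff.mpr ⟨hi₀, hi₀σ₀⟩) hmin ?_
  · intro x hx
    have hxσ₀ := (mem_sdiff.mp hx).2
    have hyx := cocircuitTropSum_le_normalizedCocircuit hd hdn hσ₀ hxσ₀ (p := p)
    have hdiff := normalizedCocircuit_sub_normalizedCocircuit (p := p) hxσ₀ hi₀σ₀
    simp only [Function.comp_apply, id]
    linarith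
  · simp only [Function.comp_apply, id, c]
    ring

end Cocircuits

section Twist

variable {d n : ℕ} {p : Finset (Fin n) → ℝ} {w : Fin n → ℝ}

/-- The twist of `p` by `w`, whose tropical linear space is `L_p - w`. -/
def twistedPlucker (p : Finset (Fin n) → ℝ) (w : Fin n → ℝ) (B : Finset (Fin n)) : ℝ :=
  p B - ∑ k ∈ B, w k

theorem add_eq_twistedPlucker_erase_add {τ : Finset (Fin n)} {k : Fin n} (hk : k ∈ τ) :
    p (τ.erase k) + w k = twistedPlucker p w (τ.erase k) + ∑ l ∈ τ, w l := by
  rw [twistedPlucker, ← sum_erase_add τ w hk]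
  ring

theorem exists_twistedPlucker_isMin (hdn : d ≤ n) :
    ∃ B : Finset (Fin n), B.card = d ∧
      ∀ B' : Finset (Fin n), B'.card = d → twistedPlucker p w B ≤ twistedPlucker p w B' := by
  obtain ⟨B, hB, hmin⟩ := exists_min_image (univ.powersetCard d) (twistedPlucker p w)
    (powersetCard_nonempty.mpr (by simpa using hdn))
  exact ⟨B, mem_powersetCard_univ.mp hB, fun B' hB' => hmin B' (mem_powersetCard_univ.mpr hB')⟩

theorem exists_mem_twistedPlucker_isMin (hdn : d ≤ n) (hw : InTropLinSpace d n p w)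
    (i : Fin n) : ∃ B : Finset (Fin n), B.card = d ∧ i ∈ B ∧
      ∀ B' : Finset (Fin n), B'.card = d → twistedPlucker p w B ≤ twistedPlucker p w B' := by
  obtain ⟨B₀, hB₀, hmin⟩ := exists_twistedPlucker_isMin (p := p) (w := w) hdn
  by_cases hi : i ∈ B₀
  · exact ⟨B₀, hB₀, hi, hmin⟩
  set τ := insert i B₀
  have hτ : τ.card = d + 1 := by rw [card_insert_of_notMem hi, hB₀]
  have herase_card : ∀ k ∈ τ, (τ.erase k).card = d := fun k hk => by
    rw [card_erase_of_mem hk, hτ, Nat.add_sub_cancel]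
  have herase_i : τ.erase i = B₀ := erase_insert hi
  have hiτ : i ∈ τ := mem_insert_self i B₀
  have hi_min : ∀ k ∈ τ, p (τ.erase i) + w i ≤ p (τ.erase k) + w k := fun k hk => by
    rw [add_eq_twistedPlucker_erase_add hiτ, add_eq_twistedPlucker_erase_add hk, herase_i]
    linarith [hmin _ (herase_card k hk)]
  obtain ⟨c, hcτ, hci, hc⟩ := (hw τ hτ).exists_ne_eq_of_isMin hiτ hi_min
  refine ⟨τ.erase c, herase_card c hcτ, mem_erase.mpr ⟨hci.symm, hiτ⟩, fun B' hB' => ?_⟩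
  rw [add_eq_twistedPlucker_erase_add hcτ, add_eq_twistedPlucker_erase_add hiτ, herase_i] at hc
  linarith [hmin B' hB']

theorem cocircuitTropSum_le (hd : 1 ≤ d) (hdn : d ≤ n) (hw : InTropLinSpace d n p w)
    (hw₀ : 0 ≤ w) : cocircuitTropSum d hd hdn p ≤ w := fun i => by
  obtain ⟨B, hB, hiB, hmin⟩ := exists_mem_twistedPlucker_isMin hdn hw i
  set σ := B.erase i
  have hiσ : i ∉ σ := notMem_erase i B
  have hσ : σ.card = d - 1 := by rw [card_erase_of_mem hiB, hB]
  have hBσ : insert i σ = B := insert_erase hiB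
  refine (cocircuitTropSum_le_normalizedCocircuit hd hdn hσ hiσ).trans
    (normalizedCocircuit_le hiσ fun j hj => ?_)
  have hjB : (insert j σ).card = d := by rw [card_insert_of_notMem hj, hσ]; omega
  have htwist := hmin _ hjB
  simp only [twistedPlucker, ← hBσ, sum_insert hiσ, sum_insert hj] at htwist
  rw [hBσ] at htwist ⊢
  linarith [show (0 : ℝ) ≤ w j from hw₀ j]

end Twist

theorem projection_of_origin_is_trop_sum_of_cocircuits {d n : ℕ} (hd : 1 ≤ d) (hdn : d ≤ n)
    (p : Finset (Fin n) → ℝ) (hp : IsValuatedMatroidR d n p) :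
    IsLeast {w : Fin n → ℝ | InTropLinSpace d n p w ∧ 0 ≤ w}
      (cocircuitTropSum d hd hdn p) :=
  ⟨⟨inTropLinSpace_cocircuitTropSum hd hdn hp, cocircuitTropSum_nonneg hd hdn⟩,
    fun _ ⟨hw, hw₀⟩ => cocircuitTropSum_le hd hdn hw hw₀⟩
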